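/- Let R be a left head variable free ATRS. If s is a term over the signature of R, s is a normal form of R, and s →*_U t, then t is a normal form of the uncurried system R_η↓. -/

import Mathlib

/-- First-order terms over a signature `F` with arity function `ar` and variables `V`. -/
inductive Term (F : Type) (ar : F → ℕ) (V : Type) : Type where
  | var : V → Term F ar V
  | app : (f : F) → (Fin (ar f) → Term F ar V) → Term F ar V

namespace Term

variable {F V : Type} {ar : F → ℕ}

/-- Application of a substitution. -/
def subst (σ : V → Term F ar V) : Term F ar V → Term F ar V
  | .var x => σ x
  | .app f ts => .app f (fun i => (ts i).subst σ)

/-- Size of a term. -/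
def size : Term F ar V → ℕ
  | .var _ => 1
  | .app _ ts => 1 + ∑ i, (ts i).size

end Term

section Rewriting

variable {F V : Type} {ar : F → ℕ}

/-- The (reflexive) subterm relation: `Subterm u t` means `u` occurs in `t`. -/
inductive Subterm : Term F ar V → Term F ar V → Prop where
  | refl (t) : Subterm t t
  | app (f) (ts : Fin (ar f) → Term F ar V) (i) (u) :
      Subterm u (ts i) → Subterm u (.app f ts)

/-- Proper subterm: `PSub u t` means `u` is a proper subterm of `t`. -/
def PSub (u t : Term F ar V) : Prop :=
  ∃ (f : F) (ts : Fin (ar f) → Term F ar V) (i : Fin (ar f)),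
    t = Term.app f ts ∧ Subterm u (ts i)

/-- One-step rewrite relation of a TRS `R`: closure of the rules under
contexts and substitutions. -/
inductive Rew (R : Set (Term F ar V × Term F ar V)) : Term F ar V → Term F ar V → Prop where
  | rule (l r : Term F ar V) (σ : V → Term F ar V) :
      (l, r) ∈ R → Rew R (l.subst σ) (r.subst σ)
  | congr (f : F) (ts : Fin (ar f) → Term F ar V) (i : Fin (ar f)) (u : Term F ar V) :
      Rew R (ts i) u → Rew R (.app f ts) (.app f (Function.update ts i u))

/-- Many-step rewriting. -/
def RStar (R : Set (Term F ar V × Term F ar V)) : Term F ar V → Term F ar V → Prop :=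
  Relation.ReflTransGen (Rew R)

/-- Normal forms. -/
def NF (R : Set (Term F ar V × Term F ar V)) (t : Term F ar V) : Prop := ∀ u, ¬ Rew R t u

/-- `t` rewrites to the normal form `u` (w.r.t. `R`). -/
def NormTo (R : Set (Term F ar V × Term F ar V)) (t u : Term F ar V) : Prop :=
  RStar R t u ∧ NF R u

/-- Termination: the rewrite relation is well-founded. -/
def Terminating (R : Set (Term F ar V × Term F ar V)) : Prop :=
  WellFounded (fun t s => Rew R s t)

/-- Confluence. -/
def Confluent (R : Set (Term F ar V × Term F ar V)) : Prop :=
  ∀ s t u, RStar R s t → RStar R s u → ∃ v, RStar R t v ∧ RStar R u v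

/-- Innermost one-step rewriting: the contracted redex has only normal
proper subterms. -/
inductive IRew (R : Set (Term F ar V × Term F ar V)) : Term F ar V → Term F ar V → Prop where
  | rule (l r : Term F ar V) (σ : V → Term F ar V) :
      (l, r) ∈ R → (∀ u, PSub u (l.subst σ) → NF R u) →
      IRew R (l.subst σ) (r.subst σ)
  | congr (f : F) (ts : Fin (ar f) → Term F ar V) (i : Fin (ar f)) (u : Term F ar V) :
      IRew R (ts i) u → IRew R (.app f ts) (.app f (Function.update ts i u))

/-- Innermost termination. -/
def ITerminating (R : Set (Term F ar V × Term F ar V)) : Prop :=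
  WellFounded (fun t s => IRew R s t)

/-- `m`-fold composition of a relation. -/
def RelPow (r : α → α → Prop) : ℕ → α → α → Prop
  | 0 => Eq
  | n + 1 => fun a c => ∃ b, r a b ∧ RelPow r n b c

/-- Derivation height of `t` w.r.t. a relation. -/
noncomputable def dh (r : α → α → Prop) (t : α) : ℕ :=
  sSup { m | ∃ u, RelPow r m t u }

/-- Derivational complexity w.r.t. a relation, restricted to starting terms
satisfying `P`. -/
noncomputable def dcOn {F V : Type} {ar : F → ℕ}
    (r : Term F ar V → Term F ar V → Prop) (P : Term F ar V → Prop) (n : ℕ) : ℕ :=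
  sSup { m | ∃ t, P t ∧ t.size ≤ n ∧ m = dh r t }

/-- `f ∈ O(g)`. -/
def BigO (f g : ℕ → ℕ) : Prop := ∃ M N : ℕ, ∀ n, f n ≤ M * g n + N

end Rewriting
section ATRS

/-- Signature for (un)curried applicative systems: `none` is the binary
application symbol `∘`, and `some (c, i)` is the symbol `c_i` of arity `i`
(with `c_0 = c` an applicative constant). -/
abbrev USig (C : Type) := Option (C × ℕ)

/-- Arity function for `USig`. -/
def uar {C : Type} : USig C → ℕ
  | none => 2
  | some (_, i) => i

/-- Terms over the signature `USig C` (variables are natural numbers). -/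
abbrev ATerm (C : Type) := Term (USig C) uar ℕ

variable {C : Type}

/-- Binary application `s ∘ t`. -/
def appT (s t : ATerm C) : ATerm C :=
  .app none (fun i => if i.1 = 0 then s else t)

/-- The applicative constant `c` (i.e. `c_0`). -/
def constT (c : C) : ATerm C :=
  .app (some (c, 0)) (fun i => (Nat.not_lt_zero _ i.isLt).elim)

/-- Symbols of a purely applicative term: only `∘` and constants `c_0`. -/
def ApplicativeSym : USig C → Prop
  | none => True
  | some (_, i) => i = 0

/-- A term over the applicative signature (constants plus `∘`). -/
def ApplicativeT (t : ATerm C) : Prop :=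
  ∀ (u : ATerm C) (f : USig C) (ts : Fin (uar f) → ATerm C),
    Subterm u t → u = Term.app f ts → ApplicativeSym f

/-- `headCount t = some (c, n)` iff `t = c ∘ t₁ ∘ ⋯ ∘ tₙ` for some terms `tᵢ`. -/
def headCount : ATerm C → Option (C × ℕ)
  | .var _ => none
  | .app none ts => (headCount (ts ⟨0, by simp [uar]⟩)).map (fun p => (p.1, p.2 + 1))
  | .app (some (_, _ + 1)) _ => none
  | .app (some (c, 0)) _ => some (c, 0)

/-- The spine `c ∘ t₁ ∘ ⋯ ∘ tₙ` occurs as a subterm of a left- or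
right-hand side of `R`. -/
def SpineIn (R : Set (ATerm C × ATerm C)) (c : C) (n : ℕ) : Prop :=
  ∃ p ∈ R, ∃ t : ATerm C, (Subterm t p.1 ∨ Subterm t p.2) ∧ headCount t = some (c, n)

/-- `aa` is the applicative-arity function of `R`: `aa c` is the maximal `n`
such that `c ∘ t₁ ∘ ⋯ ∘ tₙ` occurs in a rule of `R` (and `0` if `c` does not
occur applied). -/
def AASpec (R : Set (ATerm C × ATerm C)) (aa : C → ℕ) : Prop :=
  ∀ c : C, (∀ n, SpineIn R c n → n ≤ aa c) ∧ (aa c = 0 ∨ SpineIn R c (aa c))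

/-- A term is head variable free if no subterm is of the form `x ∘ v` with
`x` a variable. -/
def HeadVarFree (t : ATerm C) : Prop :=
  ∀ u : ATerm C, Subterm u t → ∀ (x : ℕ) (v : ATerm C), u ≠ appT (.var x) v

/-- Basic well-formedness of an applicative TRS: left-hand sides are not
variables, right-hand side variables occur on the left, and both sides are
applicative terms. -/
def IsATRS (R : Set (ATerm C × ATerm C)) : Prop :=
  ∀ p ∈ R, (∀ x : ℕ, p.1 ≠ Term.var x) ∧
    (∀ x : ℕ, Subterm (.var x) p.2 → Subterm (.var x) p.1) ∧
    ApplicativeT p.1 ∧ ApplicativeT p.2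

/-- `R` is left head variable free. -/
def LHVF (R : Set (ATerm C × ATerm C)) : Prop := ∀ p ∈ R, HeadVarFree p.1

/-- The variables `x_0, …, x_{i-1}`. -/
def uvars (i : ℕ) : Fin i → ATerm C := fun j => .var j.1

/-- The term `f_i(x_0,…,x_{i-1})`. -/
def fiT (c : C) (i : ℕ) : ATerm C := .app (some (c, i)) (fun j => .var j.1)

/-- The uncurrying system `U`, with rules
`c_i(x_1,…,x_i) ∘ y → c_{i+1}(x_1,…,x_i,y)` for all `0 ≤ i < aa c`. -/
def USys (aa : C → ℕ) : Set (ATerm C × ATerm C) :=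
  { p | ∃ (c : C) (i : ℕ), i < aa c ∧
      p = (appT (fiT c i) (.var i), fiT c (i + 1)) }

/-- The currying system `C(F)` (for a signature with arities `arF`), with
rules `f_{i+1}(x_1,…,x_i,y) → f_i(x_1,…,x_i) ∘ y` for all `0 ≤ i < arF f`
(where `f_{arF f}` plays the role of `f`). -/
def CurrySys {F : Type} (arF : F → ℕ) : Set (ATerm F × ATerm F) :=
  { p | ∃ (f : F) (i : ℕ), i < arF f ∧
      p = (fiT f (i + 1), appT (fiT f i) (.var i)) }

/-- The η-saturation `R_η` of `R` (w.r.t. applicative arities `aa`). -/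
inductive Eta (aa : C → ℕ) (R : Set (ATerm C × ATerm C)) : ATerm C × ATerm C → Prop where
  | base (p) : p ∈ R → Eta aa R p
  | eta (l r : ATerm C) (c : C) (n x : ℕ) :
      Eta aa R (l, r) → headCount l = some (c, n) → n < aa c →
      ¬ Subterm (.var x) l → ¬ Subterm (.var x) r →
      Eta aa R (appT l (.var x), appT r (.var x))

/-- The uncurried system `R_η↓`: the rules of `R_η` with both sides in
`U`-normal form. -/
def EtaDown (aa : C → ℕ) (R : Set (ATerm C × ATerm C)) : Set (ATerm C × ATerm C) :=
  { p | ∃ l r : ATerm C, Eta aa R (l, r) ∧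
      NormTo (USys aa) l p.1 ∧ NormTo (USys aa) r p.2 }

/-- The transformed system `U↓(R) = R_η↓ ∪ U(R)`. -/
def UD (aa : C → ℕ) (R : Set (ATerm C × ATerm C)) : Set (ATerm C × ATerm C) :=
  EtaDown aa R ∪ USys aa

/-- Symbols of the signature of `U↓(R)`: `∘` and `c_i` with `i ≤ aa c`. -/
def GoodSym (aa : C → ℕ) : USig C → Prop
  | none => True
  | some (c, i) => i ≤ aa c

/-- A term over the signature of `U↓(R)`. -/
def GoodTerm (aa : C → ℕ) (t : ATerm C) : Prop :=
  ∀ (u : ATerm C) (f : USig C) (ts : Fin (uar f) → ATerm C),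
    Subterm u t → u = Term.app f ts → GoodSym aa f

/-- `C'`: curry a term over the signature of `U↓(R)` and identify all
symbols `c_i` originating from the same constant `c`. -/
def curryId : ATerm C → ATerm C
  | .var x => .var x
  | .app none ts => appT (curryId (ts ⟨0, by simp [uar]⟩)) (curryId (ts ⟨1, by simp [uar]⟩))
  | .app (some (c, i)) ts =>
      (List.ofFn (fun j : Fin (uar (some (c, i))) => curryId (ts j))).foldl appT (constT c)

end ATRS

/-!
`curryId` is invariant under `U`-steps and is the identity on applicative terms, so
`curryId t = s`. A redex `l'σ` of `R_η↓` in `t`, where `l'` is the `U`-normal form of a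
left-hand side `l` of `R_η`, is sent to `l (curryId ∘ σ)`. Since η-saturation only appends
arguments, `l` contains a left-hand side of `R`, so `s` would be `R`-reducible.
-/

section Rewriting

variable {F V : Type} {ar : F → ℕ}

theorem Subterm.trans {u v t : Term F ar V} (h₁ : Subterm u v) (h₂ : Subterm v t) :
    Subterm u t := by
  induction h₂ with
  | refl => exact h₁
  | app f ts i w _ ih => exact .app f ts i u (ih h₁)

theorem Subterm.subst {u t : Term F ar V} (σ : V → Term F ar V) (h : Subterm u t) :
    Subterm (u.subst σ) (t.subst σ) := by
  induction h with
  | refl => exact .refl _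
  | app f ts i w _ ih => exact .app f (fun j => (ts j).subst σ) i _ ih

theorem NF.subterm {R : Set (Term F ar V × Term F ar V)} {u t : Term F ar V}
    (ht : NF R t) (h : Subterm u t) : NF R u := by
  induction h with
  | refl => exact ht
  | app f ts i w _ ih => exact ih fun v hv => ht _ (.congr f ts i v hv)

end Rewriting

section Applicative

variable {C : Type}

theorem subterm_appT_left {u s t : ATerm C} (h : Subterm u s) : Subterm u (appT s t) :=
  .app none (fun i : Fin (uar none) => if i.1 = 0 then s else t) ⟨0, by simp [uar]⟩ u h

theorem subterm_appT_right {u s t : ATerm C} (h : Subterm u t) : Subterm u (appT s t) :=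
  .app none (fun i : Fin (uar none) => if i.1 = 0 then s else t) ⟨1, by simp [uar]⟩ u h

theorem subterm_foldl_appT_of_subterm {L : List (ATerm C)} {x u : ATerm C}
    (h : Subterm u x) : Subterm u (L.foldl appT x) := by
  induction L generalizing x with
  | nil => exact h
  | cons a L ih => exact ih (subterm_appT_left h)

theorem subterm_foldl_appT_of_mem {L : List (ATerm C)} {x a : ATerm C} (h : a ∈ L) :
    Subterm a (L.foldl appT x) := by
  induction L generalizing x with
  | nil => simp at h
  | cons b L ih =>
      rw [List.foldl_cons]
      rcases List.mem_cons.mp h with rfl | h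
      · exact subterm_foldl_appT_of_subterm (subterm_appT_right (.refl _))
      · exact ih h

theorem subst_appT (s t : ATerm C) (σ : ℕ → ATerm C) :
    (appT s t).subst σ = appT (s.subst σ) (t.subst σ) := by
  simp only [appT, Term.subst]
  congr 1
  funext i
  split_ifs <;> rfl

theorem subst_constT (c : C) (σ : ℕ → ATerm C) : (constT c).subst σ = constT c := by
  simp only [constT, Term.subst]
  congr 1
  funext i
  exact absurd i.isLt (by simp [uar])

theorem subst_foldl_appT (L : List (ATerm C)) (x : ATerm C) (σ : ℕ → ATerm C) :
    (L.foldl appT x).subst σ = (L.map (Term.subst σ)).foldl appT (x.subst σ) := by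
  induction L generalizing x with
  | nil => rfl
  | cons a L ih => simp [ih, subst_appT]

theorem ApplicativeT.subterm {t u : ATerm C} (h : ApplicativeT t) (hs : Subterm u t) :
    ApplicativeT u :=
  fun v f ts hv he => h v f ts (hv.trans hs) he

theorem applicativeT_var (x : ℕ) : ApplicativeT (.var x : ATerm C) := by
  rintro u f ts ⟨⟩ he
  cases he

theorem applicativeT_appT {s t : ATerm C} (hs : ApplicativeT s) (ht : ApplicativeT t) :
    ApplicativeT (appT s t) := by
  intro u f ts hu he
  cases hu with
  | refl => cases he; trivial
  | app _ _ i w hw =>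
      match i with
      | ⟨0, _⟩ => exact hs u f ts hw he
      | ⟨1, _⟩ => exact ht u f ts hw he

end Applicative

section CurryId

variable {C : Type}

theorem curryId_app_none (ts : Fin (uar (none : USig C)) → ATerm C) :
    curryId (.app none ts)
      = appT (curryId (ts ⟨0, by simp [uar]⟩)) (curryId (ts ⟨1, by simp [uar]⟩)) := by
  rw [curryId]

theorem curryId_app_some (c : C) (i : ℕ) (ts : Fin (uar (some (c, i))) → ATerm C) :
    curryId (.app (some (c, i)) ts)
      = (List.ofFn fun j => curryId (ts j)).foldl appT (constT c) := by
  rw [curryId]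

theorem curryId_appT (s t : ATerm C) : curryId (appT s t) = appT (curryId s) (curryId t) := by
  rw [appT, curryId_app_none]
  simp

theorem curryId_app_congr (f : USig C) {ts ts' : Fin (uar f) → ATerm C}
    (h : ∀ j, curryId (ts j) = curryId (ts' j)) :
    curryId (.app f ts) = curryId (.app f ts') := by
  match f with
  | none => rw [curryId_app_none, curryId_app_none, h, h]
  | some (c, i) => rw [curryId_app_some, curryId_app_some, funext h]

theorem subterm_curryId_app (f : USig C) (ts : Fin (uar f) → ATerm C) (i : Fin (uar f)) :
    Subterm (curryId (ts i)) (curryId (.app f ts)) := by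
  match f, i with
  | none, ⟨0, _⟩ => exact subterm_appT_left (.refl _)
  | none, ⟨1, _⟩ => exact subterm_appT_right (.refl _)
  | some (c, n), i =>
      rw [curryId_app_some]
      exact subterm_foldl_appT_of_mem (List.mem_ofFn.mpr ⟨i, rfl⟩)

theorem curryId_subst (t : ATerm C) (σ : ℕ → ATerm C) :
    curryId (t.subst σ) = (curryId t).subst (fun x => curryId (σ x)) := by
  induction t with
  | var x => rfl
  | app f ts ih =>
      match f with
      | none =>
          show curryId (.app none fun i => (ts i).subst σ) = _
          rw [curryId_app_none, curryId_app_none, subst_appT, ih, ih]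
      | some (c, i) =>
          show curryId (.app (some (c, i)) fun j => (ts j).subst σ) = _
          rw [curryId_app_some, curryId_app_some, subst_foldl_appT, subst_constT,
            List.map_ofFn]
          simp only [Function.comp_def, ih]

theorem curryId_of_applicativeT {t : ATerm C} (h : ApplicativeT t) : curryId t = t := by
  induction t with
  | var x => rfl
  | app f ts ih =>
      match f with
      | none =>
          have ih' : ∀ j, curryId (ts j) = ts j := fun j =>
            ih j (h.subterm (.app none ts j _ (.refl _)))
          rw [curryId_app_none, ih', ih', appT]
          congr 1
          funext j
          match j with
          | ⟨0, _⟩ => rfl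
          | ⟨1, _⟩ => rfl
      | some (c, i) =>
          obtain rfl : i = 0 := h _ (some (c, i)) ts (.refl _) rfl
          rw [curryId_app_some]
          simp only [uar, List.ofFn_zero, List.foldl_nil, constT]
          congr 1
          funext j
          exact j.elim0

theorem curryId_fiT_subst (c : C) (k : ℕ) (σ : ℕ → ATerm C) :
    curryId ((fiT c k).subst σ)
      = (List.ofFn fun j : Fin k => curryId (σ j)).foldl appT (constT c) :=
  curryId_app_some c k _

theorem curryId_eq_of_rew_uSys {aa : C → ℕ} {t u : ATerm C} (h : Rew (USys aa) t u) :
    curryId t = curryId u := by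
  induction h with
  | rule l r σ hmem =>
      obtain ⟨c, i, -, hlr⟩ := hmem
      cases hlr
      rw [subst_appT, curryId_appT, curryId_fiT_subst, curryId_fiT_subst, List.ofFn_succ_last,
        List.foldl_append]
      rfl
  | congr f ts i w _ ih =>
      apply curryId_app_congr
      intro j
      by_cases hj : j = i
      · subst hj
        rw [Function.update_self, ih]
      · rw [Function.update_of_ne hj]

theorem curryId_eq_of_rStar_uSys {aa : C → ℕ} {t u : ATerm C} (h : RStar (USys aa) t u) :
    curryId t = curryId u := by
  induction h with
  | refl => rfl
  | tail _ hstep ih => exact ih.trans (curryId_eq_of_rew_uSys hstep)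

end CurryId

section Eta

variable {C : Type} {aa : C → ℕ} {R : Set (ATerm C × ATerm C)}

theorem Eta.applicativeT_fst (hR : ∀ p ∈ R, ApplicativeT p.1) {p : ATerm C × ATerm C}
    (h : Eta aa R p) : ApplicativeT p.1 := by
  induction h with
  | base p hp => exact hR p hp
  | eta l r c n x _ _ _ _ _ ih => exact applicativeT_appT ih (applicativeT_var x)

theorem Eta.exists_subterm_fst {p : ATerm C × ATerm C} (h : Eta aa R p) :
    ∃ q ∈ R, Subterm q.1 p.1 := by
  induction h with
  | base p hp => exact ⟨p, hp, .refl _⟩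
  | eta l r c n x _ _ _ _ _ ih =>
      obtain ⟨q, hq, hsub⟩ := ih
      exact ⟨q, hq, subterm_appT_left hsub⟩

theorem nf_etaDown_of_nf_curryId (hR : ∀ p ∈ R, ApplicativeT p.1) {t : ATerm C}
    (ht : NF R (curryId t)) : NF (EtaDown aa R) t := by
  intro u hu
  induction hu with
  | rule l' r' σ hmem =>
      obtain ⟨l, r, heta, ⟨hl', -⟩, -⟩ := hmem
      have hcurry : curryId l' = l := by
        rw [← curryId_eq_of_rStar_uSys hl', curryId_of_applicativeT (heta.applicativeT_fst hR)]
      obtain ⟨⟨q₁, q₂⟩, hq, hsub⟩ := heta.exists_subterm_fst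
      rw [curryId_subst, hcurry] at ht
      exact ht.subterm (hsub.subst _) _ (.rule q₁ q₂ _ hq)
  | congr f ts i w _ ih => exact ih (ht.subterm (subterm_curryId_app f ts i))

end Eta

theorem nf_preserved_general {C : Type} (R : Set (ATerm C × ATerm C)) (aa : C → ℕ)
    (hR : IsATRS R)
    (s t : ATerm C) (hsa : ApplicativeT s) (hnf : NF R s)
    (hst : RStar (USys aa) s t) :
    NF (EtaDown aa R) t := by
  have hcurry : curryId t = s := by
    rw [← curryId_eq_of_rStar_uSys hst, curryId_of_applicativeT hsa]
  exact nf_etaDown_of_nf_curryId (fun p hp => (hR p hp).2.2.1) (hcurry ▸ hnf)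

/-- if `s` is a term over the signature of `R` in `R`-normal
form and `s →*_U t`, then `t` is a normal form of `R_η↓`. -/
theorem nf_preserved {C : Type} (R : Set (ATerm C × ATerm C)) (aa : C → ℕ)
    (hR : IsATRS R) (hl : LHVF R) (haa : AASpec R aa)
    (s t : ATerm C) (hsa : ApplicativeT s) (hnf : NF R s)
    (hst : RStar (USys aa) s t) :
    NF (EtaDown aa R) t :=
  nf_preserved_general R aa hR s t hsa hnf hst
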